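/- arXiv:1007.1938 — 4 statements merged into one kernel-verified Lean document; each statement's English description precedes it below -/
import Mathlib

section
/- Let n > 4 and let μ be a permutation of {1,...,n} with μ(1) = 1. Then μ preserves rotation symmetry for cubic MRS functions in n variables if and only if μ(i) = ((i−1)(μ(2)−1) + 1) Mod n for all i with 1 ≤ i ≤ n. -/
/-- Boolean functions in `n` variables, with variables indexed by `ZMod n`
(index `i : ZMod n` corresponds to the variable `x_{i+1}` in 1-indexed notation,
so that "`a Mod n`" arithmetic on subscripts becomes arithmetic in `ZMod n`). -/
abbrev BF (n : ℕ) := (ZMod n → ZMod 2) → ZMod 2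

/-- The cubic MRS function `(1,j,k)` in `n` variables:
`x ↦ Σ_{i=1}^n x_i x_{(i+j-1) Mod n} x_{(i+k-1) Mod n}`, the sum taken in `GF(2)`. -/
def cubicMRS (n : ℕ) [NeZero n] (j k : ℕ) : BF n :=
  fun x => ∑ i : ZMod n,
    x i * x (i + ((j - 1 : ℕ) : ZMod n)) * x (i + ((k - 1 : ℕ) : ZMod n))

/-- `C_n`: the set of all cubic MRS functions `(1,j,k)`, `1 < j < k ≤ n`, in `n` variables. -/
def cubicSet (n : ℕ) [NeZero n] : Set (BF n) :=
  {f | ∃ j k : ℕ, 1 < j ∧ j < k ∧ k ≤ n ∧ f = cubicMRS n j k}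

/-- The set of cubic MRS functions `(1,j,k)` with `1 < j, k ≤ n`, `j ≠ k`. -/
def cubicSetNe (n : ℕ) [NeZero n] : Set (BF n) :=
  {f | ∃ j k : ℕ, 1 < j ∧ j ≤ n ∧ 1 < k ∧ k ≤ n ∧ j ≠ k ∧ f = cubicMRS n j k}

/-- The action of a permutation `μ` of the variables on a Boolean function:
`(μ·f)(x₁,…,xₙ) = f(x_{μ(1)},…,x_{μ(n)})`. -/
def permAct {n : ℕ} (μ : Equiv.Perm (ZMod n)) (f : BF n) : BF n :=
  fun x => f (fun i => x (μ i))

/-- A Boolean function is rotation symmetric if it is invariant under the cyclic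
shift of the variables. -/
def rotSym {n : ℕ} (f : BF n) : Prop :=
  ∀ x : ZMod n → ZMod 2, f (fun i => x (i + 1)) = f x

/-- A permutation `μ` preserves rotation symmetry (for cubic MRS functions in `n`
variables) if `μ·f` is rotation symmetric for every cubic MRS function `f`. -/
def preservesRS (n : ℕ) [NeZero n] (μ : Equiv.Perm (ZMod n)) : Prop :=
  ∀ f ∈ cubicSetNe n, rotSym (permAct μ f)



/-!
Put `σ = μ⁻¹ ∘ (· + 1) ∘ μ`. Rotation symmetry of `μ · f`, for `f` the MRS function of a monomial
`x_T`, says `f ∘ σ = f`. Evaluating at the indicator of `σ(T)`, and using that the stabiliser of a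
3-set under translation has odd order, shows that `σ` maps every 3-set onto a translate of itself.
Comparing the triples through a fixed pair `x, y` then forces `σ y - σ x = ±(y - x)` when `n > 4`
(by counting for `n ≥ 7`, by a finite check for `n = 5, 6`), so `σ` is a translation or a
reflection. A reflection is an involution while `σ` is conjugate to `· + 1`, hence `σ = (· + c)`,
that is `μ (w + c) = μ w + 1`, and this makes `μ` linear.
-/

open Finset Pointwise

section Translates

variable {G : Type*} [AddCommGroup G]

lemma eq_add_or_eq_sub_of_forall_sub {f : G → G}
    (hf : ∀ x y, f y - f x = y - x ∨ f y - f x = x - y) :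
    (∀ x, f x = f 0 + x) ∨ (∀ x, f x = f 0 - x) := by
  by_contra! ⟨⟨a, ha⟩, ⟨b, hb⟩⟩
  have := hf 0 a
  have := hf 0 b
  have := hf a b
  grind

/-- If `σ y - σ x ≠ ±(y - x)`, a triple `{x, y, z}` can be mapped onto a translate of itself in
only four ways; entry `i` is the pair `(z - x, σ z - σ x)` that the `i`-th way forces. -/
def gapCandidates (D e : G) : Fin 4 → G × G :=
  ![(D, e), (-D, D + e), (e + D, -e), (e - D, D - e)]

variable [DecidableEq G]

def MapsTriplesToTranslates (σ : Equiv.Perm G) : Prop :=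
  ∀ S : Finset G, #S = 3 → ∃ t : G, S.image σ = t +ᵥ S

lemma MapsTriplesToTranslates.exists_gapCandidates_eq {σ : Equiv.Perm G}
    (hσ : MapsTriplesToTranslates σ) {x y z : G} (hxy : x ≠ y) (hxz : x ≠ z) (hyz : y ≠ z)
    (h₁ : σ y - σ x ≠ y - x) (h₂ : σ y - σ x ≠ x - y) :
    ∃ i, gapCandidates (σ y - σ x) (y - x) i = (z - x, σ z - σ x) := by
  obtain ⟨t, ht⟩ := hσ {x, y, z} (card_eq_three.2 ⟨x, y, z, hxy, hxz, hyz, rfl⟩)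
  have hmem : ∀ w ∈ ({x, y, z} : Finset G), σ w = t + x ∨ σ w = t + y ∨ σ w = t + z := by
    intro w hw
    simpa [ht, vadd_finset_insert, eq_comm] using mem_image_of_mem σ hw
  have hx := hmem x (by simp)
  have hy := hmem y (by simp)
  have hz := hmem z (by simp)
  have := σ.injective.ne hxy
  have := σ.injective.ne hxz
  have := σ.injective.ne hyz
  simp only [gapCandidates, Fin.exists_fin_succ, Fin.isValue, Matrix.cons_val_zero, Prod.mk.injEq,
    Matrix.cons_val_succ, Matrix.cons_val_fin_one, exists_const]
  grind

end Translates

section MRS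

variable {G : Type*} [AddCommGroup G] [Fintype G] [DecidableEq G]

def mrs (T : Finset G) (y : G → ZMod 2) : ZMod 2 := ∑ i, ∏ t ∈ T, y (i + t)

lemma mrs_indicator (T S : Finset G) :
    mrs T (fun g => if g ∈ S then 1 else 0) = #{i : G | i +ᵥ T ⊆ S} := by
  simp only [mrs, prod_ite_zero, prod_const_one, sum_boole]
  congr 2
  ext i
  simp [subset_iff, mem_vadd_finset]

lemma mrs_vadd (u : G) (T : Finset G) : mrs (u +ᵥ T) = mrs T := by
  ext y
  simp only [mrs, vadd_finset_def, vadd_eq_add, prod_image fun a _ b _ => add_left_cancel]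
  exact Fintype.sum_equiv (Equiv.addRight u) _ _ fun i => by simp [add_assoc]

lemma card_stabilizer_dvd_card (T : Finset G) : #{s : G | s +ᵥ T = T} ∣ #T := by
  set H : Finset G := {s : G | s +ᵥ T = T}
  have mem_H : ∀ {a}, a ∈ H ↔ a +ᵥ T = T := by simp [H]
  have sub_mem : ∀ {a b}, a ∈ H → b ∈ H → a - b ∈ H := by
    intro a b ha hb
    rw [mem_H, sub_eq_add_neg, add_vadd, neg_vadd_eq_iff.2 (mem_H.1 hb).symm, mem_H.1 ha]
  have add_mem : ∀ {a b}, a ∈ H → b ∈ H → a + b ∈ H := fun ha hb => by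
    rw [mem_H, add_vadd, mem_H.1 hb, mem_H.1 ha]
  have hHT : H + T = T := by
    ext w
    refine ⟨fun hw => ?_, fun hw => mem_add.2 ⟨0, mem_H.2 (zero_vadd _ _), w, hw, zero_add w⟩⟩
    obtain ⟨a, ha, b, hb, rfl⟩ := mem_add.1 hw
    rw [← mem_H.1 ha]
    exact vadd_mem_vadd_finset hb
  conv_rhs => rw [← hHT]
  refine card_dvd_card_add_left ?_
  rintro _ ⟨b, -, rfl⟩ _ ⟨c, -, rfl⟩ hne
  refine disjoint_left.2 fun w hwb hwc => hne ?_
  obtain ⟨h₁, h₁H, rfl⟩ := mem_image.1 hwb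
  obtain ⟨h₂, h₂H, hw⟩ := mem_image.1 hwc
  have hbc : b - c ∈ H := by
    convert sub_mem h₂H h₁H using 1
    linear_combination (norm := abel) -hw
  refine eq_of_subset_of_card_le (fun v hv => ?_) (by
    rw [card_image_of_injective _ (add_left_injective c),
      card_image_of_injective _ (add_left_injective b)])
  obtain ⟨h, hH, rfl⟩ := mem_image.1 hv
  exact mem_image.2 ⟨h + (b - c), add_mem hH hbc, by abel⟩

lemma exists_image_eq_vadd_of_mrs_comp (σ : Equiv.Perm G) {T : Finset G} (hT : Odd #T)
    (hσ : ∀ y, mrs T (y ∘ σ) = mrs T y) : ∃ t : G, T.image σ = t +ᵥ T := by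
  set S := T.image σ
  have key := hσ fun g => if g ∈ S then 1 else 0
  have hcomp : (fun g => if g ∈ S then (1 : ZMod 2) else 0) ∘ σ =
      fun g => if g ∈ T then 1 else 0 := by
    ext g
    simp [S]
  rw [hcomp, mrs_indicator, mrs_indicator] at key
  have hstab : filter (fun i : G => i +ᵥ T ⊆ T) univ = filter (fun s => s +ᵥ T = T) univ :=
    filter_congr fun i _ => subset_iff_eq_of_card_le (card_vadd_finset i T).ge
  rw [hstab, (ZMod.natCast_eq_one_iff_odd.2 (hT.of_dvd_nat (card_stabilizer_dvd_card T)))] at key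
  obtain ⟨i, hi⟩ := card_pos.1 (ZMod.natCast_eq_one_iff_odd.1 key.symm).pos
  refine ⟨i, (eq_of_subset_of_card_le (mem_filter.1 hi).2 ?_).symm⟩
  simp [S, card_image_of_injective _ σ.injective]

end MRS

section ZModN

variable {n : ℕ}

def shiftConj (μ : Equiv.Perm (ZMod n)) : Equiv.Perm (ZMod n) :=
  μ.trans ((Equiv.addRight 1).trans μ.symm)

lemma shiftConj_apply (μ : Equiv.Perm (ZMod n)) (w : ZMod n) :
    shiftConj μ w = μ.symm (μ w + 1) := rfl

lemma apply_shiftConj (μ : Equiv.Perm (ZMod n)) (w : ZMod n) : μ (shiftConj μ w) = μ w + 1 := by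
  simp [shiftConj_apply]

lemma rotSym_permAct_iff (μ : Equiv.Perm (ZMod n)) (f : BF n) :
    rotSym (permAct μ f) ↔ ∀ y, f (y ∘ shiftConj μ) = f y := by
  refine ⟨fun h y => ?_, fun h x => ?_⟩
  · simpa [permAct, shiftConj_apply, Function.comp_def] using h (y ∘ μ.symm)
  · simpa [permAct, apply_shiftConj, Function.comp_def] using h (x ∘ μ)

lemma shiftConj_shiftConj_ne (hn : 2 < n) (μ : Equiv.Perm (ZMod n)) (w : ZMod n) :
    shiftConj μ (shiftConj μ w) ≠ w := by
  intro h
  have h2 : ((2 : ℕ) : ZMod n) = 0 := by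
    have := congrArg μ h
    rw [apply_shiftConj, apply_shiftConj] at this
    push_cast
    linear_combination this
  have := Nat.le_of_dvd two_pos ((ZMod.natCast_eq_zero_iff 2 n).1 h2)
  omega

variable [NeZero n]

lemma cubicMRS_val_succ_eq_mrs {A B : ZMod n} (hA : A ≠ 0) (hB : B ≠ 0) (hAB : A ≠ B) :
    cubicMRS n (A.val + 1) (B.val + 1) = mrs {0, A, B} := by
  ext y
  simp [cubicMRS, mrs, prod_insert, hA.symm, hB.symm, hAB, mul_assoc]

lemma cubicMRS_val_succ_mem_cubicSetNe {A B : ZMod n} (hA : A ≠ 0) (hB : B ≠ 0) (hAB : A ≠ B) :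
    cubicMRS n (A.val + 1) (B.val + 1) ∈ cubicSetNe n := by
  have hA' := (ZMod.val_ne_zero A).2 hA
  have hB' := (ZMod.val_ne_zero B).2 hB
  have hAB' : A.val ≠ B.val := ZMod.val_injective n |>.ne hAB
  exact ⟨_, _, by omega, A.val_lt, by omega, B.val_lt, by omega, rfl⟩

lemma mapsTriplesToTranslates_shiftConj {μ : Equiv.Perm (ZMod n)} (hμ : preservesRS n μ) :
    MapsTriplesToTranslates (shiftConj μ) := by
  intro S hS
  obtain ⟨x, y, z, hxy, hxz, hyz, rfl⟩ := card_eq_three.1 hS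
  have hA : y - x ≠ 0 := sub_ne_zero.2 hxy.symm
  have hB : z - x ≠ 0 := sub_ne_zero.2 hxz.symm
  have hAB : y - x ≠ z - x := by simpa using hyz
  have hS' : ({x, y, z} : Finset (ZMod n)) = x +ᵥ ({0, y - x, z - x} : Finset (ZMod n)) := by
    simp [vadd_finset_insert]
  refine exists_image_eq_vadd_of_mrs_comp _ (by rw [hS]; decide) ?_
  rw [hS', mrs_vadd, ← cubicMRS_val_succ_eq_mrs hA hB hAB]
  exact (rotSym_permAct_iff μ _).1 (hμ _ (cubicMRS_val_succ_mem_cubicSetNe hA hB hAB))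

lemma exists_gapCandidates_collision (hn : 4 < n) {D e : ZMod n} (he : e ≠ 0) (hD : D ≠ 0)
    (h₁ : D ≠ e) (h₂ : D ≠ -e) (s : Finset (Fin 4)) (hs : n - 2 ≤ #s) :
    ∃ i ∈ s, ∃ j ∈ s, gapCandidates D e i ≠ gapCandidates D e j ∧
      ((gapCandidates D e i).1 = (gapCandidates D e j).1 ∨
        (gapCandidates D e i).2 = (gapCandidates D e j).2) := by
  obtain rfl | rfl | h7 : n = 5 ∨ n = 6 ∨ 7 ≤ n := by omega
  · revert D e s; decide
  · revert D e s; decide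
  · have := s.card_le_univ
    rw [Fintype.card_fin] at this
    omega

lemma MapsTriplesToTranslates.sub_eq_or_sub_eq (hn : 4 < n) {σ : Equiv.Perm (ZMod n)}
    (hσ : MapsTriplesToTranslates σ) (x y : ZMod n) :
    σ y - σ x = y - x ∨ σ y - σ x = x - y := by
  by_contra! ⟨h₁, h₂⟩
  have hxy : x ≠ y := by rintro rfl; simp at h₁
  let s : Finset (Fin 4) := {i | ∃ z, z ≠ x ∧ z ≠ y ∧
    gapCandidates (σ y - σ x) (y - x) i = (z - x, σ z - σ x)}
  have hs : n - 2 ≤ #s := by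
    calc n - 2 = #({x, y}ᶜ : Finset (ZMod n)) := by rw [card_compl, ZMod.card, card_pair hxy]
      _ ≤ #(s.image fun i => x + (gapCandidates (σ y - σ x) (y - x) i).1) := by
        refine card_le_card fun z hz => ?_
        simp only [mem_compl, mem_insert, mem_singleton, not_or] at hz
        obtain ⟨i, hi⟩ := hσ.exists_gapCandidates_eq hxy (Ne.symm hz.1) (Ne.symm hz.2) h₁ h₂
        exact mem_image.2 ⟨i, mem_filter.2 ⟨mem_univ _, z, hz.1, hz.2, hi⟩, by simp [hi]⟩
      _ ≤ #s := card_image_le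
  obtain ⟨i, hi, j, hj, hij, hcol⟩ := exists_gapCandidates_collision hn
    (sub_ne_zero.2 hxy.symm) (sub_ne_zero.2 (σ.injective.ne hxy.symm)) h₁
    (by rwa [neg_sub]) s hs
  obtain ⟨z, -, -, hz⟩ := (mem_filter.1 hi).2
  obtain ⟨z', -, -, hz'⟩ := (mem_filter.1 hj).2
  rw [hz, hz'] at hij hcol
  have : z = z' := by
    rcases hcol with h | h
    · exact sub_left_inj.1 h
    · exact σ.injective (sub_left_inj.1 h)
  exact hij (by rw [this])

lemma eq_mul_of_apply_add_eq_add_one {μ : Equiv.Perm (ZMod n)} (h0 : μ 0 = 0) {c : ZMod n}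
    (hc : ∀ w, μ (w + c) = μ w + 1) (i : ZMod n) : μ i = μ 1 * i := by
  have hnat : ∀ m : ℕ, μ (m * c) = m := by
    intro m
    induction m with
    | zero => simpa using h0
    | succ m ih => push_cast; rw [add_one_mul, hc, ih]
  have hmul : ∀ k : ZMod n, μ k * c = k := fun k => by
    apply μ.injective
    simpa using hnat (μ k).val
  calc μ i = μ i * (μ 1 * c) := by rw [hmul, mul_one]
    _ = μ 1 * (μ i * c) := by ring
    _ = μ 1 * i := by rw [hmul]

lemma preservesRS_of_eq_mul {μ : Equiv.Perm (ZMod n)} (hμ : ∀ i, μ i = μ 1 * i) :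
    preservesRS n μ := by
  obtain ⟨p, hp⟩ := μ.surjective 1
  have hshift : ∀ w, shiftConj μ w = w + p := fun w => by
    apply μ.injective
    rw [apply_shiftConj, hμ w, hμ (w + p), mul_add, ← hμ p, hp]
  rintro _ ⟨j, k, -, -, -, -, -, rfl⟩
  refine (rotSym_permAct_iff μ _).2 fun y => ?_
  simp only [cubicMRS, Function.comp_apply, hshift]
  exact Fintype.sum_equiv (Equiv.addRight p) _ _ fun i => by simp [add_right_comm]

end ZModN

/-- In 0-indexed coordinates `μ(1) = 1` reads `μ 0 = 0`, and the formula reads `μ i = μ 1 * i`. -/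
theorem preservesRS_iff_linear (n : ℕ) [NeZero n] (hn : 4 < n)
    (μ : Equiv.Perm (ZMod n)) (h1 : μ 0 = 0) :
    preservesRS n μ ↔ ∀ i : ZMod n, μ i = μ 1 * i := by
  refine ⟨fun hμ => ?_, preservesRS_of_eq_mul⟩
  have hiso := (mapsTriplesToTranslates_shiftConj hμ).sub_eq_or_sub_eq hn
  rcases eq_add_or_eq_sub_of_forall_sub hiso with htrans | hrefl
  · refine eq_mul_of_apply_add_eq_add_one h1 (c := shiftConj μ 0) fun w => ?_
    rw [add_comm, ← htrans w, apply_shiftConj]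
  · exact (shiftConj_shiftConj_ne (by omega) μ 0 (by rw [hrefl (shiftConj μ 0), sub_self])).elim
end

section
/- Let n > 4 and let f and g be cubic MRS functions in n variables. Then g = μ·f for some permutation μ of {1,...,n} which preserves rotation symmetry if and only if g = σ_{τ,n}·f for some τ with gcd(τ, n) = 1. Consequently, the orbits of the action of the group G_n = {σ_{τ,n} : gcd(τ,n) = 1} on the set C_n of cubic MRS functions in n variables are exactly the equivalence classes of C_n under permutations of variables which preserve rotation symmetry. -/
/-- The permutation `σ_{τ,n} : i ↦ ((i-1)τ + 1) Mod n` of the variables, for `τ` a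
unit mod `n`; in the 0-indexed coordinates used here it is `i ↦ τ·i` on `ZMod n`. -/
def sigmaPerm {n : ℕ} (u : (ZMod n)ˣ) : Equiv.Perm (ZMod n) where
  toFun := fun i => (u : ZMod n) * i
  invFun := fun i => ((u⁻¹ : (ZMod n)ˣ) : ZMod n) * i
  left_inv := fun i => by simp [← mul_assoc]
  right_inv := fun i => by simp [← mul_assoc]

/-- The orbit of a Boolean function `f` under the action of the group
`G_n = {σ_{τ,n} : gcd(τ,n) = 1}`. -/
def orbit (n : ℕ) [NeZero n] (f : BF n) : Set (BF n) :=
  {g | ∃ u : (ZMod n)ˣ, g = permAct (sigmaPerm u) f}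

/-- The set of orbits of the action of `G_n` on the set `C_n` of cubic MRS functions. -/
def orbitsOn (n : ℕ) [NeZero n] : Set (Set (BF n)) :=
  {S | ∃ f ∈ cubicSet n, S = orbit n f}

open Finset Pointwise

section RotationSymmetry

variable {n : ℕ} [NeZero n]

theorem rotSym.apply_add {f : BF n} (hf : rotSym f) (t : ZMod n) (x : ZMod n → ZMod 2) :
    f (fun i => x (i + t)) = f x := by
  obtain ⟨m, rfl⟩ := ZMod.natCast_zmod_surjective t
  induction m generalizing x with
  | zero => simp
  | succ m ih =>
    calc f (fun i => x (i + (m + 1 : ℕ)))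
        = f (fun i => (fun j => x (j + m)) (i + 1)) := by
          congr; funext i; push_cast; ring_nf
      _ = f x := (hf _).trans (ih x)

theorem rotSym_permAct_sigmaPerm {f : BF n} (hf : rotSym f) (u : (ZMod n)ˣ) :
    rotSym (permAct (sigmaPerm u) f) := fun x => by
  simpa [permAct, sigmaPerm, mul_add, mul_comm] using
    hf.apply_add (u⁻¹ : (ZMod n)ˣ) fun i => x (u * i)

theorem permAct_eq_permAct_sigmaPerm {f : BF n} (hf : rotSym f) {μ : Equiv.Perm (ZMod n)}
    {α : ZMod n} {u : (ZMod n)ˣ} (hμ : ∀ i, μ i = α + u * i) :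
    permAct μ f = permAct (sigmaPerm u) f := funext fun x => by
  simpa [permAct, sigmaPerm, hμ, mul_add, ← mul_assoc, add_comm] using
    hf.apply_add (u⁻¹ * α) fun i => x (u * i)

theorem rotSym_cubicMRS (j k : ℕ) : rotSym (cubicMRS n j k) := fun x => by
  simp only [cubicMRS]
  exact Fintype.sum_equiv (Equiv.addRight 1) _ _ fun i => by simp [add_right_comm]

theorem rotSym_of_mem_cubicSetNe {f : BF n} (hf : f ∈ cubicSetNe n) : rotSym f := by
  obtain ⟨j, k, -, -, -, -, -, rfl⟩ := hf
  exact rotSym_cubicMRS j k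

theorem preservesRS_sigmaPerm (u : (ZMod n)ˣ) : preservesRS n (sigmaPerm u) :=
  fun _ hf => rotSym_permAct_sigmaPerm (rotSym_of_mem_cubicSetNe hf) u

end RotationSymmetry

theorem IsAddCyclic.eq_of_two_nsmul_eq_zero {G : Type*} [AddGroup G] [Fintype G] [IsAddCyclic G]
    {x y : G} (hx : 2 • x = 0) (hy : 2 • y = 0) (hx₀ : x ≠ 0) (hy₀ : y ≠ 0) : x = y := by
  classical
  by_contra hxy
  have hsub : ({0, x, y} : Finset G) ⊆ ({a | 2 • a = 0} : Finset G) := by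
    simp [insert_subset_iff, hx, hy]
  have := (card_le_card hsub).trans (IsAddCyclic.card_nsmul_eq_zero_le two_pos)
  rw [card_insert_of_notMem (by simp [hx₀.symm, hy₀.symm]), card_pair hxy] at this
  omega

section Windows

variable {n : ℕ} (ν : Equiv.Perm (ZMod n))

/-- The `j`-th monomial `x_{ν j} x_{ν (j+1)} x_{ν (j+2)}` of `ν · (1,2,3)`, as a set of variables. -/
def window (j : ZMod n) : Finset (ZMod n) :=
  (range 3).image fun a : ℕ => ν (j + a)

variable {ν}

theorem mem_window {j b : ZMod n} : b ∈ window ν j ↔ ∃ a : ℕ, a < 3 ∧ ν (j + a) = b := by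
  simp [window]

theorem card_window (hn : 2 < n) (j : ZMod n) : (window ν j).card = 3 := by
  refine (card_image_of_injOn fun a ha b hb hab => ?_).trans (card_range 3)
  simp only [coe_range, Set.mem_Iio] at ha hb
  exact ((ZMod.natCast_eq_natCast_iff a b n).1 (add_left_cancel (ν.injective hab))).eq_of_lt_of_lt
    (by omega) (by omega)

theorem window_injective (hn : 4 < n) : Function.Injective (window ν) := by
  intro j k hjk
  have self_mem (i : ZMod n) : ν i ∈ window ν i := mem_window.2 ⟨0, by omega, by simp⟩
  obtain ⟨a, ha, hja⟩ := mem_window.1 (hjk ▸ self_mem j : ν j ∈ window ν k)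
  obtain ⟨b, hb, hkb⟩ := mem_window.1 (hjk ▸ self_mem k : ν k ∈ window ν j)
  replace hja := ν.injective hja
  replace hkb := ν.injective hkb
  have hab : a + b = 0 := ((ZMod.natCast_eq_natCast_iff (a + b) 0 n).1 (by
    push_cast; linear_combination hja + hkb)).eq_of_lt_of_lt (by omega) (by omega)
  simpa [show a = 0 by omega] using hja.symm

theorem window_subset_window_iff (hn : 4 < n) {i k : ZMod n} :
    window ν i ⊆ window ν k ↔ i = k := by
  refine ⟨fun h => window_injective hn (eq_of_subset_of_card_le h ?_), by rintro rfl; rfl⟩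
  rw [card_window, card_window] <;> omega

end Windows

section Translation

variable {n : ℕ} [NeZero n] {ν : Equiv.Perm (ZMod n)}

theorem permAct_cubicMRS_indicator (U : Finset (ZMod n)) :
    permAct ν (cubicMRS n 2 3) (fun v => if v ∈ U then 1 else 0) =
      ∑ i, if window ν i ⊆ U then 1 else 0 := by
  refine sum_congr rfl fun i _ => ?_
  simp only [window, image_subset_iff, ← prod_boole]
  simp [prod_range_succ]

theorem exists_window_eq_vadd (hn : 4 < n) (h : rotSym (permAct ν (cubicMRS n 2 3)))
    (t k : ZMod n) : ∃ i, window ν i = t +ᵥ window ν k := by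
  have hk : permAct ν (cubicMRS n 2 3) (fun v => if v ∈ window ν k then 1 else 0) = 1 := by
    simp [permAct_cubicMRS_indicator, window_subset_window_iff hn]
  rw [← h.apply_add (-t), show (fun v => if v + -t ∈ window ν k then (1 : ZMod 2) else 0) =
      fun v => if v ∈ t +ᵥ window ν k then 1 else 0 by simp [← neg_vadd_mem_iff, add_comm],
    permAct_cubicMRS_indicator] at hk
  obtain ⟨i, -, hi⟩ := exists_ne_zero_of_sum_ne_zero (hk ▸ one_ne_zero)
  refine ⟨i, eq_of_subset_of_card_le (by simpa using hi) ?_⟩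
  rw [card_vadd_finset, card_window, card_window] <;> omega

end Translation

section Edges

variable {n : ℕ} {ν : Equiv.Perm (ZMod n)}

variable (ν) in
def InTwoWindows (a b : ZMod n) : Prop :=
  ∃ j₁ j₂, j₁ ≠ j₂ ∧ a ∈ window ν j₁ ∧ b ∈ window ν j₁ ∧ a ∈ window ν j₂ ∧ b ∈ window ν j₂

theorem InTwoWindows.symm {a b : ZMod n} : InTwoWindows ν a b → InTwoWindows ν b a :=
  fun ⟨j₁, j₂, hj, ha₁, hb₁, ha₂, hb₂⟩ => ⟨j₁, j₂, hj, hb₁, ha₁, hb₂, ha₂⟩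

theorem InTwoWindows.vadd [NeZero n] (hn : 4 < n) (h : rotSym (permAct ν (cubicMRS n 2 3)))
    {a b : ZMod n} (t : ZMod n) : InTwoWindows ν a b → InTwoWindows ν (t + a) (t + b) := by
  rintro ⟨j₁, j₂, hj, ha₁, hb₁, ha₂, hb₂⟩
  obtain ⟨i₁, hi₁⟩ := exists_window_eq_vadd hn h t j₁
  obtain ⟨i₂, hi₂⟩ := exists_window_eq_vadd hn h t j₂
  refine ⟨i₁, i₂, fun hi => hj (window_injective (ν := ν) hn ?_), ?_⟩
  · rwa [hi, hi₂, vadd_left_cancel_iff, eq_comm] at hi₁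
  · simp only [hi₁, hi₂]
    exact ⟨vadd_mem_vadd_finset ha₁, vadd_mem_vadd_finset hb₁, vadd_mem_vadd_finset ha₂,
      vadd_mem_vadd_finset hb₂⟩

theorem inTwoWindows_apply_add_one (hn : 1 < n) (i : ZMod n) :
    InTwoWindows ν (ν i) (ν (i + 1)) := by
  have : Fact (1 < n) := ⟨hn⟩
  refine ⟨i - 1, i, fun h => ?_, mem_window.2 ⟨1, by omega, ?_⟩, mem_window.2 ⟨2, by omega, ?_⟩,
    mem_window.2 ⟨0, by omega, by simp⟩, mem_window.2 ⟨1, by omega, by simp⟩⟩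
  · exact one_ne_zero (α := ZMod n) (by linear_combination -h)
  all_goals ring_nf

theorem eq_of_inTwoWindows (hn : 4 < n) {i b : ZMod n} (h : InTwoWindows ν (ν i) b) :
    b = ν (i - 1) ∨ b = ν i ∨ b = ν (i + 1) := by
  obtain ⟨j₁, j₂, hj, hi₁, hb₁, hi₂, hb₂⟩ := h
  obtain ⟨k, rfl⟩ := ν.surjective b
  obtain ⟨a₁, ha₁, hi₁⟩ := mem_window.1 hi₁
  obtain ⟨a₂, ha₂, hi₂⟩ := mem_window.1 hi₂
  obtain ⟨b₁, hb₁, hk₁⟩ := mem_window.1 hb₁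
  obtain ⟨b₂, hb₂, hk₂⟩ := mem_window.1 hb₂
  replace hi₁ := ν.injective hi₁
  replace hi₂ := ν.injective hi₂
  replace hk₁ := ν.injective hk₁
  replace hk₂ := ν.injective hk₂
  have hab : a₁ + b₂ = a₂ + b₁ := ((ZMod.natCast_eq_natCast_iff _ _ n).1 (by
    push_cast; linear_combination hi₁ - hi₂ + hk₂ - hk₁)).eq_of_lt_of_lt (by omega) (by omega)
  have ha : a₁ ≠ a₂ := by
    rintro rfl
    exact hj (by linear_combination hi₁ - hi₂)
  subst hi₁ hk₁
  obtain h | h | h : b₁ + 1 = a₁ ∨ b₁ = a₁ ∨ b₁ = a₁ + 1 := by omega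
  · left; rw [← h]; push_cast; ring_nf
  · right; left; rw [h]
  · right; right; rw [h]; push_cast; ring_nf

end Edges

section Affine

variable {n : ℕ} [NeZero n] {ν : Equiv.Perm (ZMod n)}

theorem apply_add_one_sub_apply_eq (hn : 4 < n) (h : rotSym (permAct ν (cubicMRS n 2 3)))
    (i : ZMod n) : ν (i + 1 + 1) - ν (i + 1) = ν (i + 1) - ν i := by
  have : Fact (1 < n) := ⟨by omega⟩
  obtain ⟨δ, hδ⟩ : ∃ δ, ν (i + 1) - ν i = δ := ⟨_, rfl⟩
  obtain ⟨δ', hδ'⟩ : ∃ δ', ν (i + 1 + 1) - ν (i + 1) = δ' := ⟨_, rfl⟩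
  have hδ₀ : δ ≠ 0 := hδ ▸ sub_ne_zero.2 (ν.injective.ne (by simp))
  have hδ₀' : δ' ≠ 0 := hδ' ▸ sub_ne_zero.2 (ν.injective.ne (by simp))
  have h₁ : δ' = δ ∨ 2 • δ' = 0 := by
    have := (inTwoWindows_apply_add_one (ν := ν) (by omega) (i + 1)).symm.vadd hn h (-δ')
    rw [show -δ' + ν (i + 1 + 1) = ν (i + 1) by linear_combination hδ'] at this
    rcases eq_of_inTwoWindows hn this with e | e | e
    · left; rw [add_sub_cancel_right] at e; linear_combination -e + hδ
    · exact absurd (by linear_combination -e) hδ₀'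
    · right; rw [two_nsmul]; linear_combination -e - hδ'
  have h₂ : δ' = δ ∨ 2 • δ = 0 := by
    have := (inTwoWindows_apply_add_one (ν := ν) (by omega) i).vadd hn h δ
    rw [show δ + ν i = ν (i + 1) by linear_combination -hδ] at this
    rcases eq_of_inTwoWindows hn this with e | e | e
    · right; rw [add_sub_cancel_right] at e; rw [two_nsmul]; linear_combination e - hδ
    · exact absurd (by linear_combination e) hδ₀
    · left; linear_combination -e - hδ'
  rw [hδ, hδ']
  obtain e | e₁ := h₁
  · exact e
  obtain e | e₂ := h₂
  · exact e
  exact IsAddCyclic.eq_of_two_nsmul_eq_zero e₁ e₂ hδ₀' hδ₀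

theorem exists_affine_of_rotSym (hn : 4 < n) (h : rotSym (permAct ν (cubicMRS n 2 3))) :
    ∃ (α : ZMod n) (u : (ZMod n)ˣ), ∀ i, ν i = α + u * i := by
  have hstep (m : ℕ) : ν (m + 1) - ν m = ν 1 - ν 0 := by
    induction m with
    | zero => simp
    | succ m ih => push_cast; rw [apply_add_one_sub_apply_eq hn h, ih]
  have haff (m : ℕ) : ν m = ν 0 + m * (ν 1 - ν 0) := by
    induction m with
    | zero => simp
    | succ m ih => push_cast; linear_combination hstep m + ih
  obtain ⟨k, hk⟩ := ν.surjective (ν 0 + 1)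
  obtain ⟨m, rfl⟩ := ZMod.natCast_zmod_surjective k
  have hu : IsUnit (ν 1 - ν 0) := .of_mul_eq_one_right (m : ZMod n) (by linear_combination hk - haff m)
  refine ⟨ν 0, hu.unit, fun i => ?_⟩
  obtain ⟨m, rfl⟩ := ZMod.natCast_zmod_surjective i
  rw [haff, IsUnit.unit_spec, mul_comm]

end Affine

theorem exists_preservesRS_permAct_eq_iff {n : ℕ} [NeZero n] (hn : 4 < n) {f : BF n}
    (hf : rotSym f) (g : BF n) :
    (∃ μ, preservesRS n μ ∧ permAct μ f = g) ↔ ∃ u : (ZMod n)ˣ, permAct (sigmaPerm u) f = g := by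
  constructor
  · rintro ⟨μ, hμ, rfl⟩
    obtain ⟨α, u, hμα⟩ := exists_affine_of_rotSym hn
      (hμ _ ⟨2, 3, by omega, by omega, by omega, by omega, by omega, rfl⟩)
    exact ⟨u, (permAct_eq_permAct_sigmaPerm hf hμα).symm⟩
  · rintro ⟨u, rfl⟩
    exact ⟨sigmaPerm u, preservesRS_sigmaPerm u, rfl⟩

/-- For cubic MRS functions `f, g` in `n > 4` variables: `g = μ·f` for some permutation
`μ` preserving rotation symmetry iff `g = σ_{τ,n}·f` for some `τ` with `gcd(τ,n) = 1`.
Consequently the orbits of the action of `G_n` on `C_n` are exactly the equivalence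
classes of `C_n` under permutations of variables preserving rotation symmetry. -/
theorem orbit_eq_permEquiv_class (n : ℕ) [NeZero n] (hn : 4 < n) :
    (∀ f ∈ cubicSetNe n, ∀ g ∈ cubicSetNe n,
      ((∃ μ : Equiv.Perm (ZMod n), preservesRS n μ ∧ permAct μ f = g) ↔
        (∃ u : (ZMod n)ˣ, permAct (sigmaPerm u) f = g))) ∧
    (∀ f ∈ cubicSetNe n,
      orbit n f = {g | ∃ μ : Equiv.Perm (ZMod n), preservesRS n μ ∧ permAct μ f = g}) := by
  have key {f : BF n} (hf : f ∈ cubicSetNe n) :=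
    exists_preservesRS_permAct_eq_iff hn (rotSym_of_mem_cubicSetNe hf)
  refine ⟨fun f hf g _ => key hf g, fun f hf => ?_⟩
  ext g
  simp only [orbit, Set.mem_ofPred_eq, eq_comm (a := g), ← key hf]
end

section
/- Let n > 3. Then σ_{n−1,n}·(1,2,3) = (1,2,3), and the identity σ_{1,n} and σ_{n−1,n} are the only elements of G_n which fix the cubic MRS function (1,2,3). Consequently the orbit of (1,2,3) under the action of G_n has exactly φ(n)/2 elements, where φ is Euler's totient function. -/
/-! The units `u` of `ZMod n` act on Boolean functions through `σ_u`, which sends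
`(1,2,3) = Σ x_i x_{i+1} x_{i+2}` to the sum `Σ x_i x_{i+u} x_{i+2u}` over the three-term
progressions of difference `u`; reading each progression backwards shows that `u` and `-u` give
the same function. Evaluated at the indicator of `{0,1,2}`, such a sum counts the progressions of
difference `u` inside `{0,1,2}`: for a unit `u` and `n > 3` there is exactly one when `u = ±1`
and none otherwise. So the stabilizer of `(1,2,3)` is `{±1}`, and orbit–stabilizer gives an
orbit of size `φ(n)/2`. -/

lemma ZMod.natCast_ne_zero_of_lt {n k : ℕ} (hk0 : 0 < k) (hk : k < n) : (k : ZMod n) ≠ 0 :=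
  fun h => (Nat.le_of_dvd hk0 ((ZMod.natCast_eq_zero_iff k n).1 h)).not_gt hk

section
variable {n : ℕ}

instance : MulAction (ZMod n)ˣ (BF n) where
  smul u f := permAct (sigmaPerm u) f
  one_smul f := by
    show permAct _ f = f
    funext x; simp [permAct, sigmaPerm]
  mul_smul a b f := by
    show permAct _ f = permAct _ (permAct _ f)
    funext x; simp [permAct, sigmaPerm, mul_assoc]

lemma smul_eq_permAct (u : (ZMod n)ˣ) (f : BF n) : u • f = permAct (sigmaPerm u) f := rfl

lemma ap_subset_zero_one_two (hn : 3 < n) {u i : ZMod n} (hu : IsUnit u)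
    (h : {i, i + u, i + 2 * u} ⊆ ({0, 1, 2} : Finset (ZMod n))) :
    (i = 0 ∧ u = 1) ∨ (i = 2 ∧ u = -1) := by
  have h1 : (1 : ZMod n) ≠ 0 := by
    exact_mod_cast ZMod.natCast_ne_zero_of_lt (k := 1) (by omega) (by omega)
  have h2 : (2 : ZMod n) ≠ 0 := by
    exact_mod_cast ZMod.natCast_ne_zero_of_lt (k := 2) (by omega) (by omega)
  have h3 : (3 : ZMod n) ≠ 0 := by
    exact_mod_cast ZMod.natCast_ne_zero_of_lt (k := 3) (by omega) (by omega)
  have : Fact (1 < n) := ⟨by omega⟩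
  have hu0 : u ≠ 0 := hu.ne_zero
  have h2u : 2 * u ≠ 0 := fun h => h2 (hu.mul_left_eq_zero.1 h)
  simp only [Finset.insert_subset_iff, Finset.singleton_subset_iff, Finset.mem_insert,
    Finset.mem_singleton] at h
  grind

variable [NeZero n]

lemma orbit_eq_mulActionOrbit (f : BF n) : orbit n f = MulAction.orbit (ZMod n)ˣ f := by
  ext g; exact exists_congr fun u => eq_comm

lemma ncard_orbit_of_stabilizer_eq_pair (hn : 2 < n) {f : BF n}
    (h : {u : (ZMod n)ˣ | u • f = f} = {1, -1}) : (orbit n f).ncard = n.totient / 2 := by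
  have : Fact (2 < n) := ⟨hn⟩
  have hstab : Nat.card (MulAction.stabilizer (ZMod n)ˣ f) = 2 := by
    show Nat.card {u : (ZMod n)ˣ | u • f = f} = 2
    rw [h, Nat.card_coe_set_eq,
      Set.ncard_pair fun h1 => ZMod.neg_one_ne_one (Units.ext_iff.1 h1).symm]
  have horbit := Nat.card_congr (MulAction.orbitProdStabilizerEquivGroup (ZMod n)ˣ f)
  rw [Nat.card_prod, hstab, Nat.card_eq_fintype_card (α := (ZMod n)ˣ),
    ZMod.card_units_eq_totient, ← orbit_eq_mulActionOrbit, Nat.card_coe_set_eq] at horbit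
  omega

def apCubic (d : ZMod n) : BF n := fun x => ∑ i, x i * x (i + d) * x (i + 2 * d)

lemma cubicMRS_two_three : cubicMRS n 2 3 = apCubic 1 := by
  funext x; simp [cubicMRS, apCubic]

lemma smul_apCubic (u : (ZMod n)ˣ) (d : ZMod n) :
    u • apCubic d = apCubic ((u : ZMod n) * d) := by
  funext x
  exact Fintype.sum_equiv (sigmaPerm u) _ _ fun i => by simp [sigmaPerm, mul_add, mul_left_comm]

lemma apCubic_neg (d : ZMod n) : apCubic (-d) = apCubic d := by
  funext x
  exact Fintype.sum_equiv (Equiv.subRight (2 * d)) _ _ fun i => by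
    simp only [mul_neg, Equiv.subRight_apply, sub_add_cancel]; ring_nf

lemma apCubic_indicator (S : Finset (ZMod n)) (d : ZMod n) :
    apCubic d (fun i => if i ∈ S then 1 else 0) =
      ((Finset.univ.filter fun i => {i, i + d, i + 2 * d} ⊆ S).card : ZMod 2) := by
  rw [apCubic, Finset.natCast_card_filter]
  refine Finset.sum_congr rfl fun i _ => ?_
  simp only [Finset.insert_subset_iff, Finset.singleton_subset_iff]
  split_ifs <;> simp_all

lemma apCubic_eq_apCubic_one_iff (hn : 3 < n) {u : ZMod n} (hu : IsUnit u) :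
    apCubic u = apCubic 1 ↔ u = 1 ∨ u = -1 := by
  refine ⟨fun h => ?_, by rintro (rfl | rfl) <;> simp [apCubic_neg]⟩
  have : Fact (2 < n) := ⟨by omega⟩
  have hval := congrFun h fun i => if i ∈ ({0, 1, 2} : Finset (ZMod n)) then 1 else 0
  have hone : (Finset.univ.filter fun i => {i, i + 1, i + 2 * 1} ⊆ ({0, 1, 2} : Finset (ZMod n)))
      = {0} := by
    ext i
    simp only [Finset.mem_filter, Finset.mem_univ, true_and, Finset.mem_singleton]
    constructor
    · intro hi
      rcases ap_subset_zero_one_two hn isUnit_one hi with h0 | ⟨-, h1⟩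
      · exact h0.1
      · exact absurd h1.symm ZMod.neg_one_ne_one
    · rintro rfl
      simp
  rw [apCubic_indicator, apCubic_indicator, hone, Finset.card_singleton, Nat.cast_one] at hval
  obtain ⟨i, hi⟩ : (Finset.univ.filter fun i => {i, i + u, i + 2 * u} ⊆
      ({0, 1, 2} : Finset (ZMod n))).Nonempty := by
    rw [Finset.nonempty_iff_ne_empty]
    rintro hempty
    simp [hempty] at hval
  exact (ap_subset_zero_one_two hn hu (Finset.mem_filter.1 hi).2).imp And.right And.right

end

/-- For `n > 3`: `σ_{n-1,n}` (i.e. `σ_τ` with `τ ≡ -1 (mod n)`) fixes the cubic MRS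
function `(1,2,3)`; the identity and `σ_{n-1,n}` are the only elements of `G_n` fixing
`(1,2,3)`; and consequently the orbit of `(1,2,3)` has exactly `φ(n)/2` elements. -/
theorem orbit_123 (n : ℕ) [NeZero n] (hn : 3 < n) :
    permAct (sigmaPerm (-1 : (ZMod n)ˣ)) (cubicMRS n 2 3) = cubicMRS n 2 3 ∧
    {u : (ZMod n)ˣ | permAct (sigmaPerm u) (cubicMRS n 2 3) = cubicMRS n 2 3} =
      {1, -1} ∧
    (orbit n (cubicMRS n 2 3)).ncard = Nat.totient n / 2 := by
  have hstab : {u : (ZMod n)ˣ | permAct (sigmaPerm u) (cubicMRS n 2 3) = cubicMRS n 2 3} =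
      {1, -1} := by
    ext u
    change u • cubicMRS n 2 3 = _ ↔ _
    rw [cubicMRS_two_three, smul_apCubic, mul_one, apCubic_eq_apCubic_one_iff hn u.isUnit]
    simp only [Set.mem_insert_iff, Set.mem_singleton_iff, Units.ext_iff, Units.val_one,
      Units.val_neg]
  exact ⟨hstab.superset (by simp), hstab, ncard_orbit_of_stabilizer_eq_pair (by omega) hstab⟩
end

section
/- Let n = 3^k with k ≥ 1. Then no orbit of the action of G_n on the set C_n of cubic MRS functions in n variables has size exactly 2. -/
/-!
Write the cubic MRS function `(1,j,k)` as `Σ_i x_i x_{i+A} x_{i+B}` on `ZMod n`, with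
`A = j - 1`, `B = k - 1`; then `σ_τ` acts on it by `(A, B) ↦ (τA, τB)`. For `n` odd two such
forms agree only if their supports `{0, A, B}` are translates of each other: evaluating
`Σ_i ∏_{s ∈ S} x_{i+s}` at the indicator of `T` counts mod 2 the translates of `S` equal to
`T`, and the translates fixing `T` form a subgroup of odd order.

An orbit of size 2 has a stabilizer of index 2, which contains `2² = 4`. So `{0, 4A, 4B}` is a
translate of `{0, A, B}`, and since `5` and `7` are units mod `3^k` this forces `3A = 3B = 0`.
In the cyclic group `ZMod (3^k)` that means `B = -A` and `τA = ±A` for every unit `τ`, so the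
orbit is a single point.
-/

open Finset Pointwise

section TranslateSum

variable {G : Type*} [AddCommGroup G] [Fintype G]

def cubicForm (A B : G) : (G → ZMod 2) → ZMod 2 :=
  fun x => ∑ i, x i * x (i + A) * x (i + B)

theorem cubicForm_comm (A B : G) : cubicForm A B = cubicForm B A := by
  funext x
  exact sum_congr rfl fun i _ => by ring

-- The rotation symmetric function generated by the monomial `∏ s ∈ S, x s`.
def translateSum (S : Finset G) : (G → ZMod 2) → ZMod 2 :=
  fun x => ∑ i, ∏ s ∈ S, x (i + s)

variable [DecidableEq G]

theorem cubicForm_eq_translateSum {A B : G} (hA : A ≠ 0) (hB : B ≠ 0) (hAB : A ≠ B) :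
    cubicForm A B = translateSum {0, A, B} := by
  funext x
  refine sum_congr rfl fun i _ => ?_
  rw [prod_insert (by simp [hA.symm, hB.symm]), prod_insert (by simp [hAB]), prod_singleton,
    add_zero, mul_assoc]

theorem translateSum_indicator {S U : Finset G} (hcard : #S = #U) :
    translateSum S (fun z => if z ∈ U then 1 else 0) = (#{i : G | i +ᵥ S = U} : ℕ) := by
  rw [translateSum, ← sum_boole]
  refine sum_congr rfl fun i _ => ?_
  rw [prod_boole]
  have hsub : i +ᵥ S ⊆ U ↔ i +ᵥ S = U :=
    ⟨fun h => eq_of_subset_of_card_le h (by rw [card_vadd_finset, hcard]), Eq.subset⟩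
  simp [← hsub, subset_iff, mem_vadd_finset]

theorem odd_card_vadd_stabilizer (hG : Odd (Fintype.card G)) (S : Finset G) :
    Odd #{i : G | i +ᵥ S = S} := by
  have hdvd := AddSubgroup.card_addSubgroup_dvd_card (AddAction.stabilizer G S)
  rw [Nat.card_eq_fintype_card, Nat.card_eq_fintype_card, Fintype.card_subtype] at hdvd
  simpa [AddAction.mem_stabilizer_iff] using hG.of_dvd_nat hdvd

theorem exists_vadd_eq_of_translateSum_eq (hG : Odd (Fintype.card G)) {S T : Finset G}
    (hcard : #S = #T) (h : translateSum S = translateSum T) : ∃ t : G, t +ᵥ S = T := by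
  have hT := congrFun h fun z => if z ∈ T then 1 else 0
  rw [translateSum_indicator hcard, translateSum_indicator rfl] at hT
  by_contra! hne
  rw [filter_false_of_mem fun i _ => hne i, card_empty, Nat.cast_zero, eq_comm,
    ZMod.natCast_eq_zero_iff_even] at hT
  exact Nat.not_even_iff_odd.2 (odd_card_vadd_stabilizer hG T) hT

theorem exists_vadd_eq_of_cubicForm_eq (hG : Odd (Fintype.card G)) {A B A' B' : G}
    (hA : A ≠ 0) (hB : B ≠ 0) (hAB : A ≠ B) (hA' : A' ≠ 0) (hB' : B' ≠ 0)
    (hAB' : A' ≠ B') (h : cubicForm A B = cubicForm A' B') :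
    ∃ t : G, t +ᵥ ({0, A, B} : Finset G) = {0, A', B'} := by
  refine exists_vadd_eq_of_translateSum_eq hG ?_ ?_
  · rw [card_eq_three.2 ⟨0, A, B, hA.symm, hB.symm, hAB, rfl⟩,
      card_eq_three.2 ⟨0, A', B', hA'.symm, hB'.symm, hAB', rfl⟩]
  · rwa [← cubicForm_eq_translateSum hA hB hAB, ← cubicForm_eq_translateSum hA' hB' hAB']

end TranslateSum

theorem eq_zero_or_eq_or_eq_neg_of_three_nsmul_eq_zero {G : Type*} [AddCommGroup G]
    [Fintype G] [DecidableEq G] [IsAddCyclic G] {A B : G} (hA : A ≠ 0)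
    (hA3 : 3 • A = 0) (hB3 : 3 • B = 0) : B = 0 ∨ B = A ∨ B = -A := by
  by_contra! hne
  obtain ⟨hB0, hBA, hBnegA⟩ := hne
  have hAnegA : A ≠ -A := fun h => hA <| by
    rw [← sub_eq_zero, sub_neg_eq_add, ← two_nsmul] at h
    simpa [succ_nsmul, h] using hA3
  have hsub : ({0, A, -A, B} : Finset G) ⊆ ({x | 3 • x = 0} : Finset G) := by
    intro x hx
    simp only [mem_insert, mem_singleton] at hx
    rcases hx with rfl | rfl | rfl | rfl <;> simp [hA3, hB3]
  have hcard := (card_le_card hsub).trans (IsAddCyclic.card_nsmul_eq_zero_le (by norm_num))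
  rw [card_insert_of_notMem (by simp [hA, hA.symm, hB0.symm]),
    card_insert_of_notMem (by simp [hAnegA, hBA.symm]), card_pair hBnegA.symm] at hcard
  omega

theorem three_mul_eq_zero_of_vadd_eq_four_mul {R : Type*} [CommRing R] [DecidableEq R]
    (h5 : IsUnit (5 : R)) (h7 : IsUnit (7 : R)) {A B t : R} (hA : A ≠ 0) (hB : B ≠ 0)
    (hAB : A ≠ B) (h : t +ᵥ ({0, A, B} : Finset R) = {0, 4 * A, 4 * B}) :
    3 * A = 0 ∧ 3 * B = 0 := by
  have mem : ∀ x ∈ ({0, A, B} : Finset R), t + x ∈ ({0, 4 * A, 4 * B} : Finset R) :=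
    fun x hx => h ▸ vadd_mem_vadd_finset hx
  have ht := mem 0 (by simp)
  have htA := mem A (by simp)
  have htB := mem B (by simp)
  simp only [mem_insert, mem_singleton, add_zero] at ht htA htB
  clear mem h
  wlog ht' : t = 0 ∨ t = 4 * A generalizing A B
  · exact (this hB hA hAB.symm (by tauto) (by tauto) (by tauto) (by tauto)).symm
  rcases ht' with rfl | rfl
  · simp only [zero_add] at htA htB
    rcases htA with hA0 | hA4A | hA4B
    · exact absurd hA0 hA
    · have h3A : 3 * A = 0 := by linear_combination -hA4A
      refine ⟨h3A, ?_⟩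
      rcases htB with hB0 | hB4A | hB4B
      · exact absurd hB0 hB
      · exact absurd (by linear_combination hB4A + h3A) hAB.symm
      · linear_combination -hB4B
    · rcases htB with hB0 | hB4A | hB4B
      · exact absurd hB0 hB
      · have h3A : 3 * A = 0 := h5.mul_right_eq_zero.1 (by linear_combination -hA4B - 4 * hB4A)
        exact absurd (by linear_combination hB4A + h3A) hAB.symm
      · exact absurd (by linear_combination hA4B - hB4B) hAB
  · rcases htA with h5A | hA0 | h5A
    · exact absurd (h5.mul_right_eq_zero.1 (by linear_combination h5A)) hA
    · exact absurd (by linear_combination hA0) hA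
    rcases htB with hB4A | hB0 | h3B
    · have h3A : 3 * A = 0 := h7.mul_right_eq_zero.1 (by linear_combination h5A + 4 * hB4A)
      exact ⟨h3A, by linear_combination 3 * hB4A - 4 * h3A⟩
    · exact absurd (by linear_combination hB0) hB
    · exact absurd (by linear_combination h5A - h3B) hAB

theorem ZMod.natCast_ne_natCast_of_lt {a b n : ℕ} (ha : a < n) (hb : b < n) (hab : a ≠ b) :
    (a : ZMod n) ≠ b := by
  rwa [Ne, ZMod.natCast_eq_natCast_iff', Nat.mod_eq_of_lt ha, Nat.mod_eq_of_lt hb]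

section SigmaAction

variable {n : ℕ} [NeZero n]

theorem permAct_sigmaPerm_cubicForm (u : (ZMod n)ˣ) (A B : ZMod n) :
    permAct (sigmaPerm u) (cubicForm A B) = cubicForm (u * A) (u * B) := by
  funext x
  exact Fintype.sum_equiv (sigmaPerm u) _ _ fun i => by simp [sigmaPerm, mul_add]

abbrev sigmaAction (n : ℕ) : MulAction (ZMod n)ˣ (BF n) where
  smul u f := permAct (sigmaPerm u) f
  one_smul f := by
    show permAct _ f = f
    funext x
    simp [permAct, sigmaPerm]
  mul_smul u v f := by
    show permAct _ f = permAct _ (permAct _ f)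
    funext x
    simp [permAct, sigmaPerm, mul_assoc]

theorem permAct_sigmaPerm_mul_self_eq_of_ncard_orbit_eq_two {f : BF n}
    (h : (orbit n f).ncard = 2) (u : (ZMod n)ˣ) : permAct (sigmaPerm (u * u)) f = f := by
  let := sigmaAction n
  have horbit : orbit n f = MulAction.orbit (ZMod n)ˣ f := by
    ext g
    exact exists_congr fun u => eq_comm
  exact Subgroup.mul_self_mem_of_index_two (H := MulAction.stabilizer (ZMod n)ˣ f)
    (by rw [MulAction.index_stabilizer, ← horbit, h]) u

theorem cubicForm_four_mul_eq_of_ncard_orbit_eq_two {A B : ZMod n}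
    (h : (orbit n (cubicForm A B)).ncard = 2) (h2 : IsUnit (2 : ZMod n)) :
    cubicForm (4 * A) (4 * B) = cubicForm A B := by
  have hfix := permAct_sigmaPerm_mul_self_eq_of_ncard_orbit_eq_two h h2.unit
  rwa [permAct_sigmaPerm_cubicForm, Units.val_mul, IsUnit.unit_spec, two_mul, two_add_two_eq_four]
    at hfix

theorem orbit_eq_singleton_of_forall_permAct_eq {f : BF n}
    (h : ∀ u : (ZMod n)ˣ, permAct (sigmaPerm u) f = f) : orbit n f = {f} :=
  Set.eq_singleton_iff_unique_mem.2 ⟨⟨1, (h 1).symm⟩, fun _ ⟨u, hu⟩ => hu.trans (h u)⟩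

theorem permAct_sigmaPerm_cubicForm_eq_self {A B : ZMod n} (hA : A ≠ 0) (hB : B ≠ 0)
    (hAB : A ≠ B) (hA3 : 3 * A = 0) (hB3 : 3 * B = 0) (u : (ZMod n)ˣ) :
    permAct (sigmaPerm u) (cubicForm A B) = cubicForm A B := by
  have kernel := fun {x : ZMod n} (hx : 3 * x = 0) =>
    eq_zero_or_eq_or_eq_neg_of_three_nsmul_eq_zero hA (by simpa [nsmul_eq_mul] using hA3)
      (by simpa [nsmul_eq_mul] using hx)
  obtain rfl : B = -A := (kernel hB3).resolve_left hB |>.resolve_left hAB.symm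
  have huA : (u : ZMod n) * A ≠ 0 := u.isUnit.mul_right_eq_zero.not.2 hA
  rw [permAct_sigmaPerm_cubicForm, mul_neg]
  rcases (kernel (by rw [mul_left_comm, hA3, mul_zero])).resolve_left huA with h | h <;>
    rw [h]
  rw [neg_neg, cubicForm_comm]

theorem exists_cubicForm_of_mem_cubicSet {f : BF n} (hf : f ∈ cubicSet n) :
    ∃ A B : ZMod n, A ≠ 0 ∧ B ≠ 0 ∧ A ≠ B ∧ f = cubicForm A B := by
  obtain ⟨j, l, hj, hjl, hl, rfl⟩ := hf
  refine ⟨_, _, ?_, ?_, ZMod.natCast_ne_natCast_of_lt (by omega) (by omega) (by omega), rfl⟩ <;>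
    simpa using ZMod.natCast_ne_natCast_of_lt (b := 0) (by omega) (by omega) (by omega)

end SigmaAction

theorem no_orbit_of_size_two_general (k : ℕ) (n : ℕ) (hn : n = 3 ^ k)
    [NeZero n] :
    ∀ S ∈ orbitsOn n, S.ncard ≠ 2 := by
  subst hn
  rintro _ ⟨f, hf, rfl⟩ h2
  obtain ⟨A, B, hA, hB, hAB, rfl⟩ := exists_cubicForm_of_mem_cubicSet hf
  have unit (m : ℕ) (hm : m.Coprime 3) : IsUnit (m : ZMod (3 ^ k)) :=
    (ZMod.isUnit_iff_coprime m _).2 (hm.pow_right k)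
  have h4 : IsUnit (4 : ZMod (3 ^ k)) := by exact_mod_cast unit 4 (by norm_num)
  have hfix4 := cubicForm_four_mul_eq_of_ncard_orbit_eq_two h2
    (by exact_mod_cast unit 2 (by norm_num))
  have hodd : Odd (Fintype.card (ZMod (3 ^ k))) := by
    rw [ZMod.card]
    exact Odd.pow (by decide)
  obtain ⟨t, ht⟩ := exists_vadd_eq_of_cubicForm_eq hodd hA hB hAB
    (h4.mul_right_eq_zero.not.2 hA) (h4.mul_right_eq_zero.not.2 hB)
    (h4.mul_left_cancel.mt hAB) hfix4.symm
  obtain ⟨h3A, h3B⟩ := three_mul_eq_zero_of_vadd_eq_four_mul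
    (by exact_mod_cast unit 5 (by norm_num)) (by exact_mod_cast unit 7 (by norm_num)) hA hB hAB ht
  rw [orbit_eq_singleton_of_forall_permAct_eq
    (permAct_sigmaPerm_cubicForm_eq_self hA hB hAB h3A h3B), Set.ncard_singleton] at h2
  omega

/-- For `n = 3^k`, `k ≥ 1`, no orbit of the action of `G_n` on the set `C_n` of cubic
MRS functions in `n` variables has size exactly 2. -/
theorem no_orbit_of_size_two (k : ℕ) (hk : 1 ≤ k) (n : ℕ) (hn : n = 3 ^ k)
    [NeZero n] :
    ∀ S ∈ orbitsOn n, S.ncard ≠ 2 :=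
  no_orbit_of_size_two_general k n hn
end
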